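/- arXiv:2208.14681 — 4 statements merged into one kernel-verified Lean document; each statement's English description precedes it below -/
import Mathlib

section
/- The factor distance d_F, defined by d_F(w,w') = |w| + |w'| - 2|f| where f is a maximum-length common factor of w and w', is a metric on A*: nonnegative, zero iff equal, symmetric, and satisfies the triangle inequality. -/
/-- Length of a maximum-length common factor of two words. -/
noncomputable def maxFacLen {A : Type*} (w w' : List A) : ℕ :=
  sSup {n | ∃ f : List A, f.length = n ∧ f <:+: w ∧ f <:+: w'}

/-- The factor distance `d_F(w,w') = |w| + |w'| - 2|f|`. -/
noncomputable def dF {A : Type*} (w w' : List A) : ℤ :=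
  (w.length : ℤ) + w'.length - 2 * maxFacLen w w'

namespace DFProof

variable {A : Type*}

lemma set_nonempty (w w' : List A) :
    {n | ∃ f : List A, f.length = n ∧ f <:+: w ∧ f <:+: w'}.Nonempty :=
  ⟨0, [], rfl, List.nil_infix, List.nil_infix⟩

lemma set_bdd (w w' : List A) :
    BddAbove {n | ∃ f : List A, f.length = n ∧ f <:+: w ∧ f <:+: w'} := by
  refine ⟨w.length, fun n hn => ?_⟩
  obtain ⟨f, hf, h1, _⟩ := hn
  exact hf ▸ h1.length_le

lemma maxFacLen_mem (w w' : List A) :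
    ∃ f : List A, f.length = maxFacLen w w' ∧ f <:+: w ∧ f <:+: w' :=
  Nat.sSup_mem (set_nonempty w w') (set_bdd w w')

lemma le_maxFacLen {w w' f : List A} (h1 : f <:+: w) (h2 : f <:+: w') :
    f.length ≤ maxFacLen w w' :=
  le_csSup (set_bdd w w') ⟨f, rfl, h1, h2⟩

lemma maxFacLen_le_left (w w' : List A) : maxFacLen w w' ≤ w.length := by
  obtain ⟨f, hf, h1, _⟩ := maxFacLen_mem w w'
  exact hf ▸ h1.length_le

lemma maxFacLen_le_right (w w' : List A) : maxFacLen w w' ≤ w'.length := by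
  obtain ⟨f, hf, _, h2⟩ := maxFacLen_mem w w'
  exact hf ▸ h2.length_le

lemma maxFacLen_comm (w w' : List A) : maxFacLen w w' = maxFacLen w' w := by
  unfold maxFacLen
  congr 1
  ext n
  exact ⟨fun ⟨f, h, h1, h2⟩ => ⟨f, h, h2, h1⟩, fun ⟨f, h, h1, h2⟩ => ⟨f, h, h2, h1⟩⟩

lemma maxFacLen_self (w : List A) : maxFacLen w w = w.length :=
  le_antisymm (maxFacLen_le_left w w) (le_maxFacLen List.infix_rfl List.infix_rfl)

/-- Two factors of `w'` overlap in a common factor whose length is at least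
`|f| + |g| - |w'|`. -/
lemma overlap {f g u v s t w' : List A} (h1 : u ++ (f ++ v) = w')
    (h2 : s ++ (g ++ t) = w') (hle : u.length ≤ s.length) :
    ∃ h : List A, h <:+: f ∧ h <:+: g ∧ f.length + g.length ≤ w'.length + h.length := by
  have hd1 : f ++ v = w'.drop u.length := by rw [← h1, List.drop_left]
  have hd2 : g ++ t = w'.drop s.length := by rw [← h2, List.drop_left]
  have hk : w'.drop s.length = (w'.drop u.length).drop (s.length - u.length) := by
    rw [List.drop_drop]; congr 1; omega
  have heq : g ++ t = f.drop (s.length - u.length) ++ v.drop (s.length - u.length - f.length) := by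
    rw [hd2, hk, ← hd1, List.drop_append]
  have hw'len : w'.length = s.length + (g.length + t.length) := by rw [← h2]; simp
  by_cases hkf : f.length ≤ s.length - u.length
  · exact ⟨[], List.nil_infix, List.nil_infix, by simp; omega⟩
  · have h0 : s.length - u.length - f.length = 0 := by omega
    have heq' : g ++ t = f.drop (s.length - u.length) ++ v := by
      rw [heq, h0, List.drop_zero]
    have hp1 : g <+: g ++ t := List.prefix_append g t
    have hp2 : f.drop (s.length - u.length) <+: g ++ t := heq' ▸ List.prefix_append _ v
    have hdk : f.drop (s.length - u.length) <:+: f := (List.drop_suffix (s.length - u.length) f).isInfix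
    have hlen : (f.drop (s.length - u.length)).length = f.length - (s.length - u.length) := List.length_drop ..
    rcases le_or_gt g.length (f.drop (s.length - u.length)).length with hc | hc
    · have hgp : g <+: f.drop (s.length - u.length) := List.prefix_of_prefix_length_le hp1 hp2 hc
      refine ⟨g, (hgp.isInfix).trans hdk, List.infix_rfl, ?_⟩
      have : f.length ≤ w'.length := by
        rw [← h1]; simp; omega
      omega
    · have hfp : f.drop (s.length - u.length) <+: g := List.prefix_of_prefix_length_le hp2 hp1 hc.le
      exact ⟨f.drop (s.length - u.length), hdk, hfp.isInfix, by omega⟩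

/-- The key overlap lemma for the triangle inequality. -/
lemma triangle_key (w w' w'' : List A) :
    maxFacLen w w' + maxFacLen w' w'' ≤ w'.length + maxFacLen w w'' := by
  obtain ⟨f, hf, hfw, hfw'⟩ := maxFacLen_mem w w'
  obtain ⟨g, hg, hgw', hgw''⟩ := maxFacLen_mem w' w''
  rw [← hf, ← hg]
  obtain ⟨u, v, huv⟩ := hfw'
  obtain ⟨s, t, hst⟩ := hgw'
  rw [List.append_assoc] at huv hst
  rcases le_or_gt u.length s.length with hle | hlt
  · obtain ⟨h, hhf, hhg, hlen⟩ := overlap huv hst hle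
    have := le_maxFacLen (hhf.trans hfw) (hhg.trans hgw'')
    omega
  · obtain ⟨h, hhg, hhf, hlen⟩ := overlap hst huv hlt.le
    have := le_maxFacLen (hhf.trans hfw) (hhg.trans hgw'')
    omega

end DFProof

/-- The factor distance is a metric on `A*`. -/
theorem dF_is_metric {A : Type*} [Fintype A] :
    (∀ w w' : List A, 0 ≤ dF w w') ∧
    (∀ w w' : List A, dF w w' = 0 ↔ w = w') ∧
    (∀ w w' : List A, dF w w' = dF w' w) ∧
    (∀ w w' w'' : List A, dF w w'' ≤ dF w w' + dF w' w'') := by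
  refine ⟨fun w w' => ?_, fun w w' => ?_, fun w w' => ?_, fun w w' w'' => ?_⟩
  · have h1 := DFProof.maxFacLen_le_left w w'
    have h2 := DFProof.maxFacLen_le_right w w'
    unfold dF; omega
  · constructor
    · intro h
      have h1 := DFProof.maxFacLen_le_left w w'
      have h2 := DFProof.maxFacLen_le_right w w'
      unfold dF at h
      obtain ⟨f, hf, hfw, hfw'⟩ := DFProof.maxFacLen_mem w w'
      have e1 : f = w := hfw.eq_of_length (by omega)
      have e2 : f = w' := hfw'.eq_of_length (by omega)
      rw [← e1, ← e2]
    · rintro rfl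
      unfold dF
      rw [DFProof.maxFacLen_self]
      ring
  · unfold dF
    rw [DFProof.maxFacLen_comm]
    ring
  · have := DFProof.triangle_key w w' w''
    unfold dF
    omega
end

section
/- For every positive integer k, the relation F_k (pairs of words at factor distance at most k) equals the k-fold composition F_1^k of F_1 with itself. -/
/-- The relation `F_k = {(w,w') : d_F(w,w') ≤ k}`. -/
noncomputable def Frel {A : Type*} (k : ℕ) (w w' : List A) : Prop :=
  dF w w' ≤ (k : ℤ)

/-- `k`-fold relational composition. -/
def relPow {α : Type*} (r : α → α → Prop) : ℕ → (α → α → Prop)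
  | 0 => Eq
  | n + 1 => Relation.Comp (relPow r n) r

section Aux

variable {A : Type*}

lemma mfl_bdd (w w' : List A) :
    BddAbove {n | ∃ f : List A, f.length = n ∧ f <:+: w ∧ f <:+: w'} :=
  ⟨w.length, fun _ ⟨_, hf, h1, _⟩ => hf ▸ h1.length_le⟩

lemma maxFacLen_spec (w w' : List A) :
    ∃ f : List A, f.length = maxFacLen w w' ∧ f <:+: w ∧ f <:+: w' := by
  have h := Nat.sSup_mem
    (s := {n | ∃ f : List A, f.length = n ∧ f <:+: w ∧ f <:+: w'})
    ⟨0, ⟨[], rfl, List.nil_infix, List.nil_infix⟩⟩ (mfl_bdd w w')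
  exact h

lemma le_maxFacLen {f w w' : List A} (h1 : f <:+: w) (h2 : f <:+: w') :
    f.length ≤ maxFacLen w w' :=
  le_csSup (mfl_bdd w w') ⟨f, rfl, h1, h2⟩

lemma maxFacLen_le_left (w w' : List A) : maxFacLen w w' ≤ w.length := by
  obtain ⟨f, hf, h1, _⟩ := maxFacLen_spec w w'
  exact hf ▸ h1.length_le

lemma maxFacLen_le_right (w w' : List A) : maxFacLen w w' ≤ w'.length := by
  obtain ⟨f, hf, _, h2⟩ := maxFacLen_spec w w'
  exact hf ▸ h2.length_le

lemma maxFacLen_comm (w w' : List A) : maxFacLen w w' = maxFacLen w' w := by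
  unfold maxFacLen
  congr 1
  ext n
  constructor <;> rintro ⟨f, hf, h1, h2⟩ <;> exact ⟨f, hf, h2, h1⟩

lemma dF_comm (w w' : List A) : dF w w' = dF w' w := by
  unfold dF; rw [maxFacLen_comm]; ring

lemma dF_self (w : List A) : dF w w = 0 := by
  have h1 : w.length ≤ maxFacLen w w := le_maxFacLen List.infix_rfl List.infix_rfl
  have h2 := maxFacLen_le_left w w
  unfold dF; omega

lemma take_drop_infix (l : List A) (i m : ℕ) : (l.drop i).take m <:+: l :=
  (List.take_prefix m _).isInfix.trans (List.drop_suffix i l).isInfix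

lemma infix_exists_idx {f w : List A} (h : f <:+: w) :
    ∃ i, i + f.length ≤ w.length ∧ f = (w.drop i).take f.length := by
  obtain ⟨s, t, rfl⟩ := h
  refine ⟨s.length, by simp, ?_⟩
  rw [List.append_assoc, List.drop_left, List.take_left]

lemma maxFacLen_triangle (w w' w'' : List A) :
    maxFacLen w w' + maxFacLen w' w'' ≤ w'.length + maxFacLen w w'' := by
  obtain ⟨f, hfl, hfw, hfw'⟩ := maxFacLen_spec w w'
  obtain ⟨g, hgl, hgw', hgw''⟩ := maxFacLen_spec w' w''
  obtain ⟨i, hi, hf⟩ := infix_exists_idx hfw'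
  obtain ⟨j, hj, hg⟩ := infix_exists_idx hgw'
  set F := f.length with hF
  set G := g.length with hG
  set L := w'.length with hL
  by_cases hov : F + G ≤ L
  · have := Nat.zero_le (maxFacLen w w''); omega
  · set b := max i j with hb
    set e := min (i + F) (j + G) with he
    have hb' : b = i ∨ b = j := max_choice i j
    have he' : e = i + F ∨ e = j + G := min_choice (i + F) (j + G)
    have hbi : i ≤ b := le_max_left i j
    have hbj : j ≤ b := le_max_right i j
    have hei : e ≤ i + F := min_le_left _ _
    have hej : e ≤ j + G := min_le_right _ _
    have hble : b ≤ e := by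
      rcases hb' with h1 | h1 <;> rcases he' with h2 | h2 <;> omega
    have hlow : F + G ≤ L + (e - b) := by
      rcases hb' with h1 | h1 <;> rcases he' with h2 | h2 <;> omega
    have key1 : (w'.drop b).take (e - b) = (f.drop (b - i)).take (e - b) := by
      have h1 : e - b ≤ F - (b - i) := by omega
      have h2 : i + (b - i) = b := by omega
      rw [hf, List.drop_take, List.take_take, List.drop_drop, h2]
      congr 1
      exact (inf_eq_left.mpr h1).symm
    have key2 : (w'.drop b).take (e - b) = (g.drop (b - j)).take (e - b) := by
      have h1 : e - b ≤ G - (b - j) := by omega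
      have h2 : j + (b - j) = b := by omega
      rw [hg, List.drop_take, List.take_take, List.drop_drop, h2]
      congr 1
      exact (inf_eq_left.mpr h1).symm
    have hinf1 : (w'.drop b).take (e - b) <:+: w :=
      (key1 ▸ take_drop_infix f (b - i) (e - b)).trans hfw
    have hinf2 : (w'.drop b).take (e - b) <:+: w'' :=
      (key2 ▸ take_drop_infix g (b - j) (e - b)).trans hgw''
    have hlen : ((w'.drop b).take (e - b)).length = e - b := by
      rw [List.length_take, List.length_drop]
      omega
    have := le_maxFacLen hinf1 hinf2
    rw [hlen] at this
    omega

lemma dF_triangle (w w' w'' : List A) : dF w w'' ≤ dF w w' + dF w' w'' := by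
  have := maxFacLen_triangle w w' w''
  unfold dF
  omega

lemma Frel_refl (w : List A) : Frel 1 w w := by
  unfold Frel; rw [dF_self]; norm_num

lemma Frel_concat (w : List A) (a : A) : Frel 1 (w ++ [a]) w := by
  have h1 : w.length ≤ maxFacLen (w ++ [a]) w :=
    le_maxFacLen ⟨[], [a], by simp⟩ List.infix_rfl
  have h2 := maxFacLen_le_right (w ++ [a]) w
  unfold Frel dF
  simp only [List.length_append, List.length_singleton]
  omega

lemma Frel_cons (w : List A) (a : A) : Frel 1 (a :: w) w := by
  have h1 : w.length ≤ maxFacLen (a :: w) w :=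
    le_maxFacLen ⟨[a], [], by simp⟩ List.infix_rfl
  have h2 := maxFacLen_le_right (a :: w) w
  unfold Frel dF
  simp only [List.length_cons]
  omega

lemma Frel_symm {k : ℕ} {w w' : List A} (h : Frel k w w') : Frel k w' w := by
  unfold Frel at *; rwa [dF_comm]

lemma relPow_succ_left {α : Type*} {r : α → α → Prop} {n : ℕ} {x y z : α}
    (hxy : r x y) (h : relPow r n y z) : relPow r (n + 1) x z := by
  induction n generalizing z with
  | zero => exact ⟨x, rfl, h ▸ hxy⟩
  | succ n ih =>
    obtain ⟨m, hm, hr⟩ := h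
    exact ⟨m, ih hm, hr⟩

lemma relPow_add {α : Type*} {r : α → α → Prop} {m n : ℕ} {x y z : α}
    (h1 : relPow r m x y) (h2 : relPow r n y z) : relPow r (m + n) x z := by
  induction n generalizing z with
  | zero => exact h2 ▸ h1
  | succ n ih =>
    obtain ⟨u, hu, hr⟩ := h2
    exact ⟨u, ih hu, hr⟩

lemma relPow_mono {α : Type*} {r : α → α → Prop} (hrefl : ∀ a, r a a)
    {n m : ℕ} (hnm : n ≤ m) {x y : α} (h : relPow r n x y) : relPow r m x y := by
  induction m with
  | zero => exact (Nat.le_zero.mp hnm) ▸ h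
  | succ m ih =>
    rcases Nat.lt_or_ge n (m + 1) with hlt | hge
    · exact ⟨y, ih (by omega), hrefl y⟩
    · have : n = m + 1 := by omega
      exact this ▸ h

lemma relPow_symm {α : Type*} {r : α → α → Prop} (hs : ∀ a b, r a b → r b a)
    {n : ℕ} {x y : α} (h : relPow r n x y) : relPow r n y x := by
  induction n generalizing y with
  | zero => exact h.symm
  | succ n ih =>
    obtain ⟨m, hm, hr⟩ := h
    exact relPow_succ_left (hs _ _ hr) (ih hm)

lemma relPow_to_infix (n : ℕ) : ∀ w f : List A, f <:+: w →
    w.length = f.length + n → relPow (Frel 1) n w f := by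
  induction n with
  | zero =>
    intro w f h hl
    exact ((h.eq_of_length (by omega)).symm : w = f)
  | succ n ih =>
    intro w f h hl
    obtain ⟨s, t, rfl⟩ := h
    rcases s.eq_nil_or_concat with rfl | ⟨s', a, rfl⟩
    · cases t with
      | nil => simp at hl
      | cons a t' =>
        refine ⟨f ++ [a], ih _ _ ⟨[], t', by simp⟩ ?_, Frel_concat f a⟩
        simp at hl ⊢
        omega
    · refine ⟨a :: f, ih _ _ ⟨s', t, by simp⟩ ?_, Frel_cons f a⟩
      simp at hl ⊢
      omega

lemma relPow_imp_Frel (n : ℕ) : ∀ w w' : List A,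
    relPow (Frel 1) n w w' → dF w w' ≤ (n : ℤ) := by
  induction n with
  | zero =>
    intro w w' h
    have : w = w' := h
    subst this
    rw [dF_self]
    exact_mod_cast Int.le_refl 0
  | succ n ih =>
    rintro w w' ⟨y, hy, hr⟩
    have h1 := ih w y hy
    have h2 : dF y w' ≤ (1 : ℤ) := hr
    have h3 := dF_triangle w y w'
    push_cast
    omega

end Aux

/-- For every positive `k`, `F_k = F_1^k`. -/
theorem Frel_eq_relPow {A : Type*} [Fintype A] (k : ℕ) (hk : 1 ≤ k) :
    ∀ w w' : List A, Frel k w w' ↔ relPow (Frel 1) k w w' := by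
  intro w w'
  constructor
  · intro h
    obtain ⟨f, hfl, hfw, hfw'⟩ := maxFacLen_spec w w'
    have h1 : f.length ≤ w.length := hfw.length_le
    have h2 : f.length ≤ w'.length := hfw'.length_le
    have hp : relPow (Frel 1) (w.length - f.length) w f :=
      relPow_to_infix _ w f hfw (by omega)
    have hq : relPow (Frel 1) (w'.length - f.length) f w' :=
      relPow_symm (fun _ _ => Frel_symm)
        (relPow_to_infix _ w' f hfw' (by omega))
    have hcomp := relPow_add hp hq
    have hpk : w.length - f.length + (w'.length - f.length) ≤ k := by
      unfold Frel dF at h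
      omega
    exact relPow_mono (fun a => Frel_refl a) hpk hcomp
  · intro h
    exact relPow_imp_Frel k w w' h
end

section
/- For every k ≥ 1, the relation F_k = {(w,w') : d_F(w,w') ≤ k} over a binary (or larger) alphabet is not a recognizable relation; that is, there is no finite index set I and recognizable sets T_i, U_i ⊆ A* with F_k = ⋃_{i∈I} T_i × U_i. -/
/-- A subset of `A*` is recognizable (regular) if it is accepted by a finite automaton. -/
def IsRecognizable {A : Type*} (L : Set (List A)) : Prop :=
  ∃ (σ : Type) (_ : Fintype σ) (M : DFA A σ), M.accepts = L

/-!
The powers `(a^{n(k+1)})ₙ` of a single letter form a fooling set for `F_k`: each pair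
`(a^{n(k+1)}, a^{n(k+1)})` lies in `F_k`, while `d_F(a^{n(k+1)}, a^{m(k+1)}) = |n - m|(k+1) > k`
for `n ≠ m`. A finite union of rectangles `T_i × U_i` containing the diagonal pairs puts two
of them, say for `n ≠ m`, in the same rectangle, and then also contains `(a^{n(k+1)}, a^{m(k+1)})`.
So `F_k` is not even a finite union of rectangles, recognizable or not.
-/

theorem not_forall_iff_exists_rectangle_of_fooling_set {α β ι κ : Type*} [Finite ι]
    [Infinite κ] {R : α → β → Prop} (x : κ → α) (y : κ → β) (hdiag : ∀ n, R (x n) (y n))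
    (hoff : Pairwise fun n m => ¬ R (x n) (y m)) (T : ι → Set α) (U : ι → Set β) :
    ¬ ∀ a b, R a b ↔ ∃ i, a ∈ T i ∧ b ∈ U i := by
  intro hR
  choose rect hT hU using fun n => (hR (x n) (y n)).mp (hdiag n)
  obtain ⟨n, m, hnm, hrect⟩ := Finite.exists_ne_map_eq_of_infinite rect
  exact hoff hnm ((hR _ _).mpr ⟨rect n, hT n, hrect ▸ hU m⟩)

theorem List.replicate_prefix_replicate {α : Type*} (a : α) {m n : ℕ} (h : m ≤ n) :
    List.replicate m a <+: List.replicate n a := by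
  rw [← Nat.add_sub_cancel' h, List.replicate_add]
  exact List.prefix_append _ _

theorem maxFacLen_replicate {A : Type*} (a : A) (p q : ℕ) :
    maxFacLen (List.replicate p a) (List.replicate q a) = min p q := by
  refine IsGreatest.csSup_eq ⟨⟨List.replicate (min p q) a, List.length_replicate, ?_, ?_⟩, ?_⟩
  · exact (List.replicate_prefix_replicate a (min_le_left p q)).isInfix
  · exact (List.replicate_prefix_replicate a (min_le_right p q)).isInfix
  · rintro n ⟨f, rfl, hp, hq⟩
    simpa using le_min hp.length_le hq.length_le

theorem dF_replicate {A : Type*} (a : A) (p q : ℕ) :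
    dF (List.replicate p a) (List.replicate q a) = |(p : ℤ) - q| := by
  rw [dF, maxFacLen_replicate, List.length_replicate, List.length_replicate]
  rcases le_total p q with h | h
  · rw [min_eq_left h, abs_of_nonpos (by omega)]
    ring
  · rw [min_eq_right h, abs_of_nonneg (by omega)]
    ring

theorem Frel_not_recognizable_general {A : Type*} [Fintype A] (hA : 2 ≤ Fintype.card A)
    (k : ℕ) :
    ¬ ∃ (I : Type) (_ : Fintype I) (T U : I → Set (List A)),
        (∀ i, IsRecognizable (T i) ∧ IsRecognizable (U i)) ∧
        (∀ w w' : List A, dF w w' ≤ (k : ℤ) ↔ ∃ i, w ∈ T i ∧ w' ∈ U i) := by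
  rintro ⟨I, _, T, U, -, hF⟩
  obtain ⟨a⟩ : Nonempty A := Fintype.card_pos_iff.mp (by omega)
  let x : ℕ → List A := fun n => List.replicate (n * (k + 1)) a
  refine not_forall_iff_exists_rectangle_of_fooling_set x x ?_ ?_ T U hF
  · intro n
    simp [x, dF_replicate]
  · intro n m hnm
    have hdist : (1 : ℤ) ≤ |(n : ℤ) - m| :=
      Int.one_le_abs (sub_ne_zero.mpr (by exact_mod_cast hnm))
    simp only [x, dF_replicate, not_le]
    push_cast
    rw [← sub_mul, abs_mul, abs_of_nonneg (by positivity : (0 : ℤ) ≤ k + 1)]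
    nlinarith

/-- For every `k ≥ 1`, the relation `F_k` over an alphabet with at least two letters
is not a recognizable relation. -/
theorem Frel_not_recognizable {A : Type*} [Fintype A] (hA : 2 ≤ Fintype.card A)
    (k : ℕ) (hk : 1 ≤ k) :
    ¬ ∃ (I : Type) (_ : Fintype I) (T U : I → Set (List A)),
        (∀ i, IsRecognizable (T i) ∧ IsRecognizable (U i)) ∧
        (∀ w w' : List A, dF w w' ≤ (k : ℤ) ↔ ∃ i, w ∈ T i ∧ w' ∈ U i) :=
  Frel_not_recognizable_general hA k
end

section
/- If z_0 is a word of length n ≥ 1 with initial character a, and b is a character different from a, then the word z = z_0 a b^n is overlapping-free: whenever z v ∈ A* z with |v| ≤ |z| - 1, we have v = ε. -/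
/-! Write `z = z₀ a bⁿ` with `n = |z₀|`. An overlap `z v = x z` with `|v| = k` means `z` has
period `k`, i.e. `z[i + k] = z[i]`. Since `z[0] = z[n] = a` and `z[n+1], …, z[2n]` are all `b`,
a shift `1 ≤ k ≤ n` sends position `n` into the `b`-block, and a shift `n < k ≤ 2n` sends
position `0` there; either way an `a` would have to equal `b`. -/

namespace List

variable {α : Type*}

theorem getElem?_add_length_eq_of_append_eq_append {w v x : List α} (h : w ++ v = x ++ w)
    {i : ℕ} (hi : i + v.length < w.length) : w[i + v.length]? = w[i]? := by
  have hx : x.length = v.length := by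
    have := congrArg length h
    simp only [length_append] at this
    omega
  have := congrArg (·[i + v.length]?) h
  rwa [getElem?_append_left hi, getElem?_append_right (by omega), hx,
    Nat.add_sub_cancel] at this

theorem getElem?_append_singleton_append_replicate (u : List α) (c b : α) {m j : ℕ}
    (hj : j < m) : (u ++ [c] ++ replicate m b)[u.length + 1 + j]? = some b := by
  rw [getElem?_append_right (by simp)]
  simp [hj]

end List

open List in
theorem overlapping_free_general {A : Type*} (a b : A) (hba : b ≠ a) (z₀ : List A)
    (hhead : z₀.head? = some a) :
    ∀ v x : List A,
      (z₀ ++ [a] ++ List.replicate z₀.length b) ++ v =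
        x ++ (z₀ ++ [a] ++ List.replicate z₀.length b) →
      v.length ≤ (z₀ ++ [a] ++ List.replicate z₀.length b).length - 1 →
      v = [] := by
  intro v x hzv hvlen
  by_contra hv
  set n := z₀.length
  set z := z₀ ++ [a] ++ replicate n b
  have hzlen : z.length = 2 * n + 1 := by simp [z]; omega
  have hz₀ : z[0]? = some a := by
    simp only [z, ← head?_eq_getElem?, head?_append, hhead, Option.some_or]
  have hk : 0 < v.length := length_pos_iff.2 hv
  obtain ⟨i, j, hj, hia, hij⟩ : ∃ i j, j < n ∧ z[i]? = some a ∧ i + v.length = n + 1 + j := by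
    rcases Nat.lt_or_ge n v.length with hkn | hkn
    · exact ⟨0, v.length - n - 1, by omega, hz₀, by omega⟩
    · exact ⟨n, v.length - 1, by omega, by simp [z, n], by omega⟩
  have hperiod := getElem?_add_length_eq_of_append_eq_append hzv (i := i) (by omega)
  rw [hij, getElem?_append_singleton_append_replicate z₀ a b hj, hia] at hperiod
  exact hba (Option.some.inj hperiod)

/-- If `z₀` has length `n ≥ 1` and initial character `a`, and `b ≠ a`, then
`z = z₀ a bⁿ` is overlapping-free. -/
theorem overlapping_free {A : Type*} (a b : A) (hba : b ≠ a) (z₀ : List A)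
    (hlen : 1 ≤ z₀.length) (hhead : z₀.head? = some a) :
    ∀ v x : List A,
      (z₀ ++ [a] ++ List.replicate z₀.length b) ++ v =
        x ++ (z₀ ++ [a] ++ List.replicate z₀.length b) →
      v.length ≤ (z₀ ++ [a] ++ List.replicate z₀.length b).length - 1 →
      v = [] :=
  overlapping_free_general a b hba z₀ hhead
end
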